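/- arXiv:2011.14278 — 4 statements merged into one kernel-verified Lean document; each statement's English description precedes it below -/
import Mathlib

section
/- Let S be an isometry of a metric space (Y,d), y ∈ Y, and (h_n) a sequence of positive integers with h_{n+1} = 4h_n + 1. Suppose for some N and ε > 0 we have d(S^{h_m}(y), y) < 3ε for all m ≥ N. Then d(S(y), y) < 15ε. -/
theorem iso_iter {Y : Type*} [MetricSpace Y] {S : Y → Y} (hS : Isometry S) :
    ∀ k : ℕ, Isometry (S^[k])
  | 0 => by simpa using isometry_id
  | (k+1) => by rw [Function.iterate_succ]; exact (iso_iter hS k).comp hS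

/-- If `S` is an isometry, `h` satisfies `h (n+1) = 4 * h n + 1` with all `h n > 0`,
and `d(S^[h m] y, y) < 3ε` for all `m ≥ N`, then `d(S y, y) < 15ε`. -/
theorem stmt_1 {Y : Type*} [MetricSpace Y] (S : Y → Y) (hS : Isometry S)
    (y : Y) (h : ℕ → ℕ) (hpos : ∀ n, 0 < h n) (hrec : ∀ n, h (n + 1) = 4 * h n + 1)
    (N : ℕ) (ε : ℝ) (hε : 0 < ε)
    (hclose : ∀ m, N ≤ m → dist (S^[h m] y) y < 3 * ε) :
    dist (S y) y < 15 * ε := by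
  set a := h N with ha
  have h1 : dist (S^[a] y) y < 3 * ε := hclose N le_rfl
  have h2 : dist (S^[4 * a + 1] y) y < 3 * ε := by
    rw [← hrec N]; exact hclose (N + 1) (Nat.le_succ N)
  have key : ∀ k : ℕ, dist (S^[k * a] y) y ≤ k * dist (S^[a] y) y := by
    intro k
    induction k with
    | zero => simp
    | succ n ih =>
      have : S^[(n + 1) * a] y = S^[n * a] (S^[a] y) := by
        rw [← Function.iterate_add_apply]; ring_nf
      calc dist (S^[(n+1) * a] y) y
          ≤ dist (S^[(n+1) * a] y) (S^[n * a] y) + dist (S^[n * a] y) y :=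
            dist_triangle _ _ _
        _ = dist (S^[a] y) y + dist (S^[n * a] y) y := by
            rw [this, (iso_iter hS (n * a)).dist_eq]
        _ ≤ dist (S^[a] y) y + n * dist (S^[a] y) y := by linarith
        _ = (n + 1 : ℕ) * dist (S^[a] y) y := by push_cast; ring
  have h4 : dist (S^[4 * a] y) y ≤ 4 * dist (S^[a] y) y := by
    simpa using key 4
  have hstep : dist (S y) (S^[4 * a + 1] y) = dist y (S^[4 * a] y) := by
    rw [Function.iterate_succ_apply', hS.dist_eq]
  calc dist (S y) y ≤ dist (S y) (S^[4 * a + 1] y) + dist (S^[4 * a + 1] y) y :=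
        dist_triangle _ _ _
    _ = dist y (S^[4 * a] y) + dist (S^[4 * a + 1] y) y := by rw [hstep]
    _ = dist (S^[4 * a] y) y + dist (S^[4 * a + 1] y) y := by rw [dist_comm]
    _ < 15 * ε := by linarith
end

section
/- Let (X, μ, T) be an invertible nonsingular transformation that is ergodic with isometric coefficients. Then T^n is ergodic for every nonzero integer n (i.e., T is totally ergodic). -/
open MeasureTheory

/-- Discrete-type metric on `Bool`, induced from the embedding into `ℝ`. -/
noncomputable instance : MetricSpace Bool :=
  MetricSpace.induced (fun b => if b then (1 : ℝ) else 0)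
    (by intro a b; cases a <;> cases b <;> simp) inferInstance

/-- Key step: if `A` is a.e. invariant under `T ^ (m'+1)`, then the map sending `x` to the
pattern of visits of `x` to `A` along the orbit segment of length `m'+1` intertwines `T`
with the rotation of coordinates, an isometry of a finite (hence separable) metric space;
EIC then forces the pattern to be a.e. constant, so `A` is null or conull. -/
private lemma stmt_5_aux {X : Type*} [MeasurableSpace X] (μ : Measure X) (T : Equiv.Perm X)
    (hT : Measurable T)
    (hEIC : ∀ (Y : Type) [MetricSpace Y] [TopologicalSpace.SeparableSpace Y]
      (S : Y ≃ᵢ Y) (φ : X → Y), @Measurable X Y _ (borel Y) φ →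
      (∀ᵐ x ∂μ, φ (T x) = S (φ x)) → ∃ c : Y, ∀ᵐ x ∂μ, φ x = c)
    (m' : ℕ) (A : Set X) (hA : MeasurableSet A)
    (key : ∀ᵐ x ∂μ, ((T ^ (m' + 1) : Equiv.Perm X) x ∈ A ↔ x ∈ A)) :
    μ A = 0 ∨ μ Aᶜ = 0 := by
  classical
  set m : ℕ := m' + 1 with hm
  -- the coding map
  set φ : X → (Fin m → Bool) := fun x k => decide ((T ^ (k : ℕ) : Equiv.Perm X) x ∈ A) with hφdef
  -- the rotation isometry
  set S : (Fin m → Bool) ≃ᵢ (Fin m → Bool) :=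
    IsometryEquiv.piCongrLeft' (Y := fun _ => Bool) (finRotate m).symm with hSdef
  have hSapp : ∀ (f : Fin m → Bool) (k : Fin m), S f k = f (finRotate m k) := by
    intro f k
    simp [hSdef, IsometryEquiv.piCongrLeft', Equiv.piCongrLeft']
  -- every preimage under φ is measurable
  have hφall : ∀ s : Set (Fin m → Bool), MeasurableSet (φ ⁻¹' s) := by
    intro s
    have hs : φ ⁻¹' s = ⋃ y ∈ s, φ ⁻¹' {y} := by
      ext x; simp
    rw [hs]
    refine MeasurableSet.biUnion (Set.to_countable s) fun y _ => ?_
    have hy : φ ⁻¹' {y} = ⋂ k : Fin m,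
        {x | decide ((T ^ (k : ℕ) : Equiv.Perm X) x ∈ A) = y k} := by
      ext x; simp [hφdef, funext_iff]
    rw [hy]
    refine MeasurableSet.iInter fun k => ?_
    have hk : Measurable (⇑(T ^ (k : ℕ) : Equiv.Perm X)) := by
      rw [Equiv.Perm.coe_pow]; exact hT.iterate (k : ℕ)
    cases hyk : y k with
    | false =>
        have he : {x | decide ((T ^ (k : ℕ) : Equiv.Perm X) x ∈ A) = false}
            = (⇑(T ^ (k : ℕ) : Equiv.Perm X) ⁻¹' A)ᶜ := by
          ext x; simp
        rw [he]; exact (hk hA).compl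
    | true =>
        have he : {x | decide ((T ^ (k : ℕ) : Equiv.Perm X) x ∈ A) = true}
            = ⇑(T ^ (k : ℕ) : Equiv.Perm X) ⁻¹' A := by
          ext x; simp
        rw [he]; exact hk hA
  -- equivariance a.e.
  have hequiv : ∀ᵐ x ∂μ, φ (T x) = S (φ x) := by
    filter_upwards [key] with x hx
    funext k
    rw [hSapp]
    have hTk : (T ^ (k : ℕ) : Equiv.Perm X) (T x) = (T ^ ((k : ℕ) + 1) : Equiv.Perm X) x := by
      rw [pow_succ, Equiv.Perm.mul_apply]
    by_cases hk : k = Fin.last m'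
    · subst hk
      have h1 : ((finRotate m (Fin.last m') : Fin m) : ℕ) = 0 := by
        simp [hm, finRotate_succ_apply, Fin.val_add_one]
      have h2 : ((Fin.last m' : Fin m) : ℕ) = m' := rfl
      simp only [hφdef, hTk, h1, h2]
      simp only [pow_zero, Equiv.Perm.coe_one, id_eq]
      exact decide_eq_decide.mpr hx
    · have h1 : ((finRotate m k : Fin m) : ℕ) = (k : ℕ) + 1 := by
        simp [hm, finRotate_succ_apply, Fin.val_add_one, hk]
      simp only [hφdef, hTk, h1]
  obtain ⟨c, hc⟩ := hEIC (Fin m → Bool) S φ (fun s _ => hφall s) hequiv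
  have h0 : ∀ᵐ x ∂μ, (x ∈ A ↔ c (0 : Fin m) = true) := by
    filter_upwards [hc] with x hx
    have h1 := congrFun hx (0 : Fin m)
    simp only [hφdef] at h1
    rw [← h1]
    have h2 : ((0 : Fin m) : ℕ) = 0 := rfl
    rw [h2]
    simp
  cases hc0 : c (0 : Fin m) with
  | false =>
      left
      refine measure_eq_zero_iff_ae_notMem.mpr ?_
      filter_upwards [h0] with x hx
      intro hxA
      rw [hc0] at hx
      exact absurd (hx.mp hxA) (by simp)
  | true =>
      right
      refine measure_eq_zero_iff_ae_notMem.mpr ?_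
      filter_upwards [h0] with x hx
      intro hxA
      rw [hc0] at hx
      exact hxA (hx.mpr rfl)

/-- An invertible nonsingular transformation that is ergodic with isometric
coefficients is totally ergodic: every nonzero integer power is ergodic. -/
theorem stmt_5 {X : Type*} [MeasurableSpace X] (μ : Measure X) (T : Equiv.Perm X)
    (hT : Measurable T) (hTinv : Measurable T.symm)
    (hns : Measure.QuasiMeasurePreserving T μ μ)
    (hnsinv : Measure.QuasiMeasurePreserving T.symm μ μ)
    (hEIC : ∀ (Y : Type) [MetricSpace Y] [TopologicalSpace.SeparableSpace Y]
      (S : Y ≃ᵢ Y) (φ : X → Y), @Measurable X Y _ (borel Y) φ →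
      (∀ᵐ x ∂μ, φ (T x) = S (φ x)) → ∃ c : Y, ∀ᵐ x ∂μ, φ x = c) :
    ∀ n : ℤ, n ≠ 0 → ∀ A : Set X, MeasurableSet A →
      μ (symmDiff ((T ^ n : Equiv.Perm X) ⁻¹' A) A) = 0 → μ A = 0 ∨ μ Aᶜ = 0 := by
  intro n hn A hA hnull
  obtain ⟨m', hm'⟩ : ∃ m', n.natAbs = m' + 1 :=
    ⟨n.natAbs - 1, (Nat.succ_pred_eq_of_pos (Int.natAbs_pos.mpr hn)).symm⟩
  have hqmp : Measure.QuasiMeasurePreserving (⇑(T ^ (m' + 1) : Equiv.Perm X)) μ μ := by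
    rw [Equiv.Perm.coe_pow]; exact hns.iterate _
  have haeeq : (⇑(T ^ (m' + 1) : Equiv.Perm X)) ⁻¹' A =ᵐ[μ] A := by
    rcases Int.natAbs_eq n with h | h <;> rw [hm'] at h
    · have hTn : (T ^ n : Equiv.Perm X) = T ^ (m' + 1) := by
        rw [h]; exact zpow_natCast T (m' + 1)
      rw [← hTn]
      exact measure_symmDiff_eq_zero_iff.mp hnull
    · have hTn : (T ^ n : Equiv.Perm X) = (T ^ (m' + 1) : Equiv.Perm X).symm := by
        rw [h, zpow_neg, zpow_natCast]; rfl
      have h0 : (⇑(T ^ (m' + 1) : Equiv.Perm X).symm) ⁻¹' A =ᵐ[μ] A := by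
        rw [← hTn]; exact measure_symmDiff_eq_zero_iff.mp hnull
      have h1 := hqmp.preimage_ae_eq h0
      have h2 : (⇑(T ^ (m' + 1) : Equiv.Perm X)) ⁻¹'
          ((⇑(T ^ (m' + 1) : Equiv.Perm X).symm) ⁻¹' A) = A := by
        ext x; simp
      rw [h2] at h1
      exact h1.symm
  have key : ∀ᵐ x ∂μ, ((T ^ (m' + 1) : Equiv.Perm X) x ∈ A ↔ x ∈ A) := by
    rw [Filter.eventuallyEq_set] at haeeq
    filter_upwards [haeeq] with x hx
    exact hx
  exact stmt_5_aux μ T hT hEIC m' A hA key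
end

section
/- Let (q_i) be a sequence of positive integers with 2 ≤ q_{i+1}/q_i for all i, and let B = { Σ_{j≥L} a_j q_j : 0 ≤ a_j ≤ ⌊q_{j+1}/q_j⌋, all but finitely many a_j zero }. Then for every b ∈ B there exists r ∈ B with b < r ≤ b + q_L; in particular, consecutive elements of B differ by at most q_L. -/
private def TT (q : ℕ → ℕ) (L M : ℕ) : ℕ := ∑ j ∈ Finset.Ico L M, (q (j+1) / q j) * q j

private lemma Tlow (q : ℕ → ℕ) (hpos : ∀ i, 0 < q i) (L : ℕ) :
    ∀ M, L ≤ M → q M ≤ TT q L M + q L := by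
  intro M hM
  induction M, hM using Nat.le_induction with
  | base => simp [TT]
  | succ M hLM ih =>
    have hsum : TT q L (M+1) = TT q L M + (q (M+1)/q M) * q M :=
      Finset.sum_Ico_succ_top hLM _
    have h1 := Nat.div_add_mod (q (M+1)) (q M)
    have h2 : q (M+1) % q M < q M := Nat.mod_lt _ (hpos M)
    have hcomm : q M * (q (M+1) / q M) = (q (M+1) / q M) * q M := mul_comm _ _
    omega

private lemma key (q : ℕ → ℕ) (hpos : ∀ i, 0 < q i) (L : ℕ) :
    ∀ M t, t ≤ TT q L M →
    ∃ a : ℕ → ℕ, (∀ j, a j ≤ q (j+1) / q j) ∧ (∀ j, j < L → a j = 0) ∧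
      (∀ j, M ≤ j → a j = 0) ∧
      t ≤ ∑ j ∈ Finset.Ico L M, a j * q j ∧
      ∑ j ∈ Finset.Ico L M, a j * q j < t + q L := by
  intro M
  induction M with
  | zero =>
    intro t ht
    simp [TT] at ht
    subst ht
    exact ⟨fun _ => 0, by simp, by simp, by simp, by simp, by simpa using hpos L⟩
  | succ M ih =>
    intro t ht
    rcases Nat.lt_or_ge M L with hML | hLM
    · have he : Finset.Ico L (M+1) = ∅ := Finset.Ico_eq_empty (by omega)
      rw [TT, he] at ht
      simp at ht
      subst ht
      exact ⟨fun _ => 0, by simp, by simp, by simp, by simp [he], by simpa [he] using hpos L⟩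
    · have hsumT : TT q L (M+1) = TT q L M + (q (M+1)/q M) * q M :=
        Finset.sum_Ico_succ_top hLM _
      by_cases hT : t ≤ TT q L M
      · obtain ⟨a, h1, h2, h3, h4, h5⟩ := ih t hT
        have hS : ∑ j ∈ Finset.Ico L (M+1), a j * q j = ∑ j ∈ Finset.Ico L M, a j * q j := by
          rw [Finset.sum_Ico_succ_top hLM, h3 M le_rfl]; simp
        exact ⟨a, h1, h2, fun j hj => h3 j (by omega), by omega, by omega⟩
      · -- t > TT q L M
        have hdm := Nat.div_add_mod t (q M)
        have hmlt : t % q M < q M := Nat.mod_lt _ (hpos M)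
        by_cases hc : q (M+1) / q M ≤ t / q M
        · -- use full digit f at M
          have hfq : (q (M+1) / q M) * q M ≤ t := by
            have h1 : (q (M+1) / q M) * q M ≤ (t / q M) * q M :=
              Nat.mul_le_mul_right _ hc
            have h2 : (t / q M) * q M ≤ t := Nat.div_mul_le_self t (q M)
            omega
          obtain ⟨a, h1, h2, h3, h4, h5⟩ := ih (t - (q (M+1) / q M) * q M) (by omega)
          refine ⟨fun j => if j = M then q (M+1) / q M else a j, ?_, ?_, ?_, ?_, ?_⟩
          · intro j; by_cases h : j = M <;> simp [h, h1 j]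
          · intro j hj; have : j ≠ M := by omega
            simp [this, h2 j hj]
          · intro j hj; have : j ≠ M := by omega
            simp [this, h3 j (by omega)]
          all_goals {
            rw [Finset.sum_Ico_succ_top hLM]
            have hcg : ∑ j ∈ Finset.Ico L M, (if j = M then q (M+1) / q M else a j) * q j
                = ∑ j ∈ Finset.Ico L M, a j * q j := by
              apply Finset.sum_congr rfl
              intro j hj
              have : j ≠ M := by simp [Finset.mem_Ico] at hj; omega
              simp [this]
            simp only [eq_self_iff_true, if_true, hcg]
            omega }
        · push_neg at hc
          by_cases hr : t % q M ≤ TT q L M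
          · -- digit c = t / q M at M
            obtain ⟨a, h1, h2, h3, h4, h5⟩ := ih (t % q M) hr
            have hqc : q M * (t / q M) = (t / q M) * q M := mul_comm _ _
            refine ⟨fun j => if j = M then t / q M else a j, ?_, ?_, ?_, ?_, ?_⟩
            · intro j; by_cases h : j = M <;> simp [h, h1 j]
              omega
            · intro j hj; have : j ≠ M := by omega
              simp [this, h2 j hj]
            · intro j hj; have : j ≠ M := by omega
              simp [this, h3 j (by omega)]
            all_goals {
              rw [Finset.sum_Ico_succ_top hLM]
              have hcg : ∑ j ∈ Finset.Ico L M, (if j = M then t / q M else a j) * q j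
                  = ∑ j ∈ Finset.Ico L M, a j * q j := by
                apply Finset.sum_congr rfl
                intro j hj
                have : j ≠ M := by simp [Finset.mem_Ico] at hj; omega
                simp [this]
              simp only [eq_self_iff_true, if_true, hcg]
              omega }
          · -- round up: digit c+1 at M, zeros below
            push_neg at hr
            have hqm : q M ≤ TT q L M + q L := Tlow q hpos L M hLM
            have hqc : q M * (t / q M) = (t / q M) * q M := mul_comm _ _
            refine ⟨fun j => if j = M then t / q M + 1 else 0, ?_, ?_, ?_, ?_, ?_⟩
            · intro j; by_cases h : j = M <;> simp [h]
              omega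
            · intro j hj; have : j ≠ M := by omega
              simp [this]
            · intro j hj; have : j ≠ M := by omega
              simp [this]
            all_goals {
              rw [Finset.sum_Ico_succ_top hLM]
              have hcg : ∑ j ∈ Finset.Ico L M, (if j = M then t / q M + 1 else 0) * q j
                  = 0 := by
                apply Finset.sum_eq_zero
                intro j hj
                have : j ≠ M := by simp [Finset.mem_Ico] at hj; omega
                simp [this]
              simp only [eq_self_iff_true, if_true, hcg]
              have hexp : (t / q M + 1) * q M = (t / q M) * q M + q M := by ring
              omega }

/-- For a sequence `(q_i)` of positive integers with `q_{i+1}/q_i ≥ 2`, the set `B` of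
sums `Σ_{j ≥ L} a_j q_j` with `0 ≤ a_j ≤ ⌊q_{j+1}/q_j⌋` and finitely many nonzero `a_j`
has gaps of size at most `q_L`: every `b ∈ B` has a successor `r ∈ B` with
`b < r ≤ b + q_L`. -/
theorem stmt_14 (q : ℕ → ℕ) (hpos : ∀ i, 0 < q i)
    (hratio : ∀ i, 2 * q i ≤ q (i + 1)) (L : ℕ)
    (B : Set ℕ)
    (hB : B = {b : ℕ | ∃ a : ℕ → ℕ, (∀ j, a j ≤ q (j + 1) / q j) ∧
      (∀ j, j < L → a j = 0) ∧ (∃ N, ∀ j, N ≤ j → a j = 0) ∧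
      b = ∑' j, a j * q j}) :
    ∀ b ∈ B, ∃ r ∈ B, b < r ∧ r ≤ b + q L := by
  subst hB
  rintro b ⟨a, ha1, ha2, ⟨N, hN⟩, rfl⟩
  -- growth of TT
  have hstep : ∀ m, L ≤ m → TT q L m + 1 ≤ TT q L (m+1) := by
    intro m hm
    have hsum : TT q L (m+1) = TT q L m + (q (m+1)/q m) * q m :=
      Finset.sum_Ico_succ_top hm _
    have h1 : 1 ≤ q (m+1) / q m := by
      rw [Nat.le_div_iff_mul_le (hpos m)]
      have := hratio m; have := hpos m; omega
    have h2 := hpos m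
    nlinarith
  set m0 := max N L with hm0
  have hgrow : ∀ k, k ≤ TT q L (m0 + k) := by
    intro k
    induction k with
    | zero => simp
    | succ k ihk =>
      have h := hstep (m0 + k) (by omega)
      show k + 1 ≤ TT q L (m0 + k + 1)
      omega
  set b := ∑' j, a j * q j with hb
  set M := m0 + (b + 1) with hM
  have hMN : N ≤ M := by omega
  have hML : L ≤ M := by omega
  obtain ⟨a', h1, h2, h3, h4, h5⟩ := key q hpos L M (b + 1) (by have := hgrow (b+1); rw [hM]; omega)
  refine ⟨∑ j ∈ Finset.Ico L M, a' j * q j, ⟨a', h1, h2, ⟨M, fun j hj => h3 j hj⟩, ?_⟩, by omega, by omega⟩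
  exact (tsum_eq_sum (fun j hj => by
    simp [Finset.mem_Ico] at hj
    rcases Nat.lt_or_ge j L with h | h
    · simp [h2 j h]
    · simp [h3 j (hj h)])).symm
end

section
/- Let (Y,d,S) be a metric space with isometry S, and (q_i) a sequence of positive integers with 2 ≤ q_{i+1}/q_i ≤ K for a constant K. Suppose there exists y ∈ Y with Σ_{i≥1} d(S^{q_i}y, y) < ∞. Then the orbit closure T = closure{S^n y : n ∈ ℕ} is totally bounded. -/
/-- If `S` is an isometry, `(q_i)` satisfies `2 ≤ q_{i+1}/q_i ≤ K`, and
`Σ d(S^{q_i} y, y) < ∞` for some `y`, then the forward orbit closure of `y` is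
totally bounded. -/
theorem stmt_15 {Y : Type*} [MetricSpace Y] (S : Y → Y) (hS : Isometry S)
    (q : ℕ → ℕ) (hpos : ∀ i, 0 < q i) (K : ℕ)
    (hlow : ∀ i, 2 * q i ≤ q (i + 1)) (hhigh : ∀ i, q (i + 1) ≤ K * q i)
    (y : Y) (hsum : Summable fun i => dist (S^[q i] y) y) :
    TotallyBounded (closure (Set.range fun n : ℕ => S^[n] y)) := by
  apply TotallyBounded.closure
  rw [Metric.totallyBounded_iff]
  intro ε hε
  -- iterates are isometries
  have hiter : ∀ n : ℕ, Isometry (S^[n]) := by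
    intro n
    induction n with
    | zero => simpa using isometry_id
    | succ n ih => rw [Function.iterate_succ]; exact ih.comp hS
  -- q is strictly monotone
  have hmono : StrictMono q := by
    apply strictMono_nat_of_lt_succ
    intro i
    have := hlow i
    have := hpos i
    omega
  -- K ≥ 2
  have hK : 0 < K := by
    have h1 := hlow 0
    have h2 := hhigh 0
    have h3 := hpos 0
    nlinarith
  have hKR : (0:ℝ) < K := by exact_mod_cast hK
  -- choose L such that any finite sum of tail terms is < ε / K
  obtain ⟨t, ht⟩ := summable_iff_vanishing.mp hsum (Set.Iio (ε / K))
    (Iio_mem_nhds (by positivity))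
  set L : ℕ := (t.sup id) + 1 with hL
  have hdisj : ∀ m : ℕ, Disjoint (Finset.Ico L m) t := by
    intro m
    rw [Finset.disjoint_left]
    intro j hj hjt
    have : j ≤ t.sup id := Finset.le_sup (f := id) hjt
    simp only [Finset.mem_Ico] at hj
    omega
  -- step lemma: distance after a blocks of q m
  have step : ∀ (m a s : ℕ),
      dist (S^[a * q m + s] y) (S^[s] y) ≤ a * dist (S^[q m] y) y := by
    intro m a s
    induction a with
    | zero => simp
    | succ a ih =>
      have he : (a + 1) * q m + s = (a * q m + s) + q m := by ring
      have h1 : S^[(a + 1) * q m + s] y = S^[a * q m + s] (S^[q m] y) := by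
        rw [he, Function.iterate_add_apply]
      calc dist (S^[(a + 1) * q m + s] y) (S^[s] y)
          ≤ dist (S^[(a + 1) * q m + s] y) (S^[a * q m + s] y)
            + dist (S^[a * q m + s] y) (S^[s] y) := dist_triangle _ _ _
        _ ≤ dist (S^[q m] y) y + a * dist (S^[q m] y) y := by
            rw [h1]
            have := (hiter (a * q m + s)).dist_eq (S^[q m] y) y
            rw [this]
            linarith [ih]
        _ = ((a + 1 : ℕ) : ℝ) * dist (S^[q m] y) y := by push_cast; ring
  -- key lemma by induction
  have key : ∀ m : ℕ, ∀ n < q (L + m), ∃ r < q L,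
      dist (S^[n] y) (S^[r] y)
        ≤ ∑ j ∈ Finset.Ico L (L + m), dist (S^[q j] y) y * K := by
    intro m
    induction m with
    | zero =>
      intro n hn
      exact ⟨n, by simpa using hn, by simp⟩
    | succ m ih =>
      intro n hn
      by_cases hn' : n < q (L + m)
      · obtain ⟨r, hr, hd⟩ := ih n hn'
        refine ⟨r, hr, hd.trans ?_⟩
        apply Finset.sum_le_sum_of_subset_of_nonneg
        · apply Finset.Ico_subset_Ico_right; omega
        · intro j _ _; positivity
      · push_neg at hn'
        set a : ℕ := n / q (L + m) with ha
        set s : ℕ := n % q (L + m) with hs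
        have hdm : n = a * q (L + m) + s :=
          (Nat.div_add_mod' n (q (L + m))).symm
        have hqpos := hpos (L + m)
        have hsq : s < q (L + m) := Nat.mod_lt _ hqpos
        have haK : a ≤ K := by
          by_contra hcon
          push_neg at hcon
          have h1 : a * q (L + m) ≤ n := by
            rw [ha]; exact Nat.div_mul_le_self n _
          have h2 : q (L + m + 1) ≤ K * q (L + m) := hhigh (L + m)
          have h3 : n < q (L + m + 1) := by
            have : L + (m + 1) = L + m + 1 := by ring
            rwa [this] at hn
          nlinarith
        obtain ⟨r, hr, hd⟩ := ih s hsq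
        refine ⟨r, hr, ?_⟩
        have htri : dist (S^[n] y) (S^[r] y)
            ≤ dist (S^[n] y) (S^[s] y) + dist (S^[s] y) (S^[r] y) :=
          dist_triangle _ _ _
        have hstep : dist (S^[n] y) (S^[s] y) ≤ a * dist (S^[q (L + m)] y) y := by
          rw [hdm]; exact step (L + m) a s
        have haKR : (a : ℝ) ≤ K := by exact_mod_cast haK
        have hsplit : ∑ j ∈ Finset.Ico L (L + (m + 1)), dist (S^[q j] y) y * K
            = (∑ j ∈ Finset.Ico L (L + m), dist (S^[q j] y) y * K)
              + dist (S^[q (L + m)] y) y * K := by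
          have : L + (m + 1) = (L + m) + 1 := by ring
          rw [this, Finset.sum_Ico_succ_top (by omega)]
        rw [hsplit]
        have hd0 : (0:ℝ) ≤ dist (S^[q (L + m)] y) y := dist_nonneg
        nlinarith
  -- conclude
  refine ⟨(fun r => S^[r] y) '' (Set.Iio (q L)), (Set.finite_Iio _).image _, ?_⟩
  rintro x ⟨n, rfl⟩
  have hnq : n < q (L + (n + 1)) := by
    have h1 : L + (n + 1) ≤ q (L + (n + 1)) := hmono.le_apply
    omega
  obtain ⟨r, hr, hd⟩ := key (n + 1) n hnq
  have hsum_lt : ∑ j ∈ Finset.Ico L (L + (n + 1)), dist (S^[q j] y) y < ε / K := by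
    have := ht (Finset.Ico L (L + (n + 1))) (hdisj _)
    simpa using this
  have hbound : dist (S^[n] y) (S^[r] y) < ε := by
    calc dist (S^[n] y) (S^[r] y)
        ≤ ∑ j ∈ Finset.Ico L (L + (n + 1)), dist (S^[q j] y) y * K := hd
      _ = (∑ j ∈ Finset.Ico L (L + (n + 1)), dist (S^[q j] y) y) * K := by
          rw [Finset.sum_mul]
      _ < (ε / K) * K := by
          apply mul_lt_mul_of_pos_right hsum_lt hKR
      _ = ε := by field_simp
  refine Set.mem_iUnion₂.mpr ⟨S^[r] y, ⟨r, hr, rfl⟩, ?_⟩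
  simpa [Metric.mem_ball, dist_comm] using hbound
end
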